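/- Let Θ = U D V^T be the singular value decomposition of a rank-r matrix Θ ∈ ℝ^{d1×d2}, with U ∈ ℝ^{d1×r}, V ∈ ℝ^{d2×r} having orthonormal columns and D invertible diagonal with positive entries. Define the tangent-space projection P_T M = U U^T M + M V V^T − U U^T M V V^T. Then for any matrix M ∈ ℝ^{d1×d2}: 0 ≤ ‖M‖_N − ‖Θ‖_N − ‖(I−P_T)M‖_N − ⟨U V^T, M − Θ⟩ ≤ ‖(P_T M − Θ) V D^{−1/2}‖_F² + ‖D^{−1/2} U^T (P_T M − Θ)‖_F². -/

import Mathlib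

open Matrix

noncomputable def frobNorm {m n : ℕ} (M : Matrix (Fin m) (Fin n) ℝ) : ℝ :=
  Real.sqrt (Matrix.trace (Mᵀ * M))

noncomputable def nuclearNorm {m n : ℕ} (M : Matrix (Fin m) (Fin n) ℝ) : ℝ :=
  ∑ i, Real.sqrt ((show (Mᵀ * M).IsHermitian by
    simpa [Matrix.conjTranspose_eq_transpose_of_trivial] using Matrix.isHermitian_conjTranspose_mul_self M).eigenvalues i)

noncomputable def spectralNorm' {m n : ℕ} (M : Matrix (Fin m) (Fin n) ℝ) : ℝ :=
  ⨆ i, Real.sqrt ((show (Mᵀ * M).IsHermitian by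
    simpa [Matrix.conjTranspose_eq_transpose_of_trivial] using Matrix.isHermitian_conjTranspose_mul_self M).eigenvalues i)

noncomputable def mip {m n : ℕ} (A B : Matrix (Fin m) (Fin n) ℝ) : ℝ :=
  Matrix.trace (Aᵀ * B)

/-!
The nuclear norm is dual to the operator norm: `tr (Gᵀ A) ≤ ‖A‖_N` for every contraction `G`,
with equality for the polar factor of `A`, and `‖X Yᵀ‖_N ≤ (‖X‖_F² + ‖Y‖_F²) / 2`.

Lower bound: `B = M - P_T M` satisfies `Uᵀ B = 0` and `B V = 0`, hence so does its polar factor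
`G_B`; then `U Vᵀ + G_B` is again a contraction, and testing `M` against it gives
`‖M‖_N ≥ ⟨U Vᵀ, M⟩ + ‖B‖_N`, while `‖Θ‖_N = tr D = ⟨U Vᵀ, Θ⟩`.

Upper bound: `‖M‖_N ≤ ‖Θ + P_T (M - Θ)‖_N + ‖B‖_N`. With `S = D^{1/2}`, `W = D^{-1/2}`,
`R = W Uᵀ (M - Θ)` and `C = (I - U Uᵀ) (M - Θ) V W` one has
`Θ + P_T (M - Θ) = (U S + C) (V S + Rᵀ)ᵀ - C R`, and the two products are bounded by
`(2 tr D + 2 ⟨U Vᵀ, M - Θ⟩ + ‖C‖_F² + ‖R‖_F²) / 2` and `(‖C‖_F² + ‖R‖_F²) / 2`. Finally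
`‖C‖_F ≤ ‖(M - Θ) V W‖_F`, and `M - Θ` may be replaced by `P_T M - Θ` in both remainder terms
because `B V = 0` and `Uᵀ B = 0`.
-/

namespace Matrix

section Contraction

variable {l m n r : Type*}

lemma transpose_one_sub_mul_transpose [DecidableEq m] [Fintype r] (U : Matrix m r ℝ) :
    (1 - U * Uᵀ)ᵀ = 1 - U * Uᵀ := by
  rw [transpose_sub, transpose_one, transpose_mul, transpose_transpose]

variable [Fintype m]

lemma two_mul_transpose_mul_apply_le (X Y : Matrix m n ℝ) (i : n) :
    2 * (Xᵀ * Y) i i ≤ (Xᵀ * X) i i + (Yᵀ * Y) i i := by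
  simp only [mul_apply, transpose_apply, Finset.mul_sum, ← Finset.sum_add_distrib]
  exact Finset.sum_le_sum fun k _ => by nlinarith [sq_nonneg (X k i - Y k i)]

lemma two_mul_trace_transpose_mul_le [Fintype n] (X Y : Matrix m n ℝ) :
    2 * trace (Xᵀ * Y) ≤ trace (Xᵀ * X) + trace (Yᵀ * Y) := by
  simp only [trace, diag, Finset.mul_sum, ← Finset.sum_add_distrib]
  exact Finset.sum_le_sum fun i _ => two_mul_transpose_mul_apply_le X Y i

lemma trace_transpose_mul_self_nonneg [Fintype n] (X : Matrix m n ℝ) : 0 ≤ trace (Xᵀ * X) :=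
  (posSemidef_conjTranspose_mul_self X).trace_nonneg

lemma trace_add_transpose_mul_add [Fintype n] (X Y : Matrix m n ℝ) :
    trace ((X + Y)ᵀ * (X + Y)) = trace (Xᵀ * X) + 2 * trace (Xᵀ * Y) + trace (Yᵀ * Y) := by
  have hYX : trace (Yᵀ * X) = trace (Xᵀ * Y) := by
    rw [← trace_transpose, transpose_mul, transpose_transpose]
  simp only [transpose_add, Matrix.add_mul, Matrix.mul_add, trace_add, hYX]
  ring

def IsContraction [DecidableEq n] (G : Matrix m n ℝ) : Prop :=
  (1 - Gᵀ * G).PosSemidef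

lemma isContraction_of_transpose_mul_self_eq_one [DecidableEq n] {G : Matrix m n ℝ}
    (h : Gᵀ * G = 1) : IsContraction G := by
  rw [IsContraction, h, sub_self]
  exact PosSemidef.zero

lemma one_sub_mul_transpose_mul_self [DecidableEq m] [Fintype r] [DecidableEq r]
    {U : Matrix m r ℝ} (hU : Uᵀ * U = 1) : (1 - U * Uᵀ) * (1 - U * Uᵀ) = 1 - U * Uᵀ := by
  have h : U * Uᵀ * (U * Uᵀ) = U * Uᵀ := by
    rw [Matrix.mul_assoc, ← Matrix.mul_assoc Uᵀ, hU, Matrix.one_mul]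
  simp only [Matrix.mul_sub, Matrix.sub_mul, Matrix.mul_one, Matrix.one_mul, h]
  abel

lemma isContraction_one_sub_mul_transpose [DecidableEq m] [Fintype r] [DecidableEq r]
    {U : Matrix m r ℝ} (hU : Uᵀ * U = 1) : IsContraction (1 - U * Uᵀ) := by
  rw [IsContraction, transpose_one_sub_mul_transpose, one_sub_mul_transpose_mul_self hU,
    sub_sub_cancel]
  simpa only [conjTranspose_eq_transpose_of_trivial] using posSemidef_self_mul_conjTranspose U

namespace IsContraction

variable [DecidableEq n]

lemma transpose_mul_self_apply_le_one {G : Matrix m n ℝ} (hG : IsContraction G) (i : n) :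
    (Gᵀ * G) i i ≤ 1 := by
  have := hG.diag_nonneg (i := i)
  rwa [sub_apply, one_apply_eq, sub_nonneg] at this

lemma transpose_mul_apply_le_one {X Y : Matrix m n ℝ} (hX : IsContraction X)
    (hY : IsContraction Y) (i : n) : (Xᵀ * Y) i i ≤ 1 := by
  linarith [two_mul_transpose_mul_apply_le X Y i, hX.transpose_mul_self_apply_le_one i,
    hY.transpose_mul_self_apply_le_one i]

lemma trace_transpose_mul_self_mul_le [Fintype n] [Fintype l] {G : Matrix m n ℝ}
    (hG : IsContraction G) (X : Matrix n l ℝ) :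
    trace ((G * X)ᵀ * (G * X)) ≤ trace (Xᵀ * X) := by
  have h := (hG.conjTranspose_mul_mul_same X).trace_nonneg
  rw [conjTranspose_eq_transpose_of_trivial, Matrix.mul_sub, Matrix.sub_mul, Matrix.mul_one,
    trace_sub, sub_nonneg] at h
  simpa only [transpose_mul, Matrix.mul_assoc] using h

lemma mul [Fintype l] [Fintype n] [DecidableEq m] {G : Matrix m n ℝ} {H : Matrix l m ℝ}
    (hG : IsContraction G) (hH : IsContraction H) : IsContraction (H * G) := by
  have h : 1 - (H * G)ᵀ * (H * G) = (1 - Gᵀ * G) + Gᵀ * (1 - Hᵀ * H) * G := by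
    simp only [transpose_mul, Matrix.mul_sub, Matrix.sub_mul, Matrix.mul_one, Matrix.mul_assoc]
    abel
  rw [IsContraction, h]
  simpa only [conjTranspose_eq_transpose_of_trivial] using
    hG.add (hH.conjTranspose_mul_mul_same G)

lemma mul_transpose_add [Fintype n] [Fintype r] [DecidableEq r] {U : Matrix m r ℝ}
    {V : Matrix n r ℝ} {G : Matrix m n ℝ} (hG : IsContraction G) (hU : Uᵀ * U = 1)
    (hV : Vᵀ * V = 1) (hUG : Uᵀ * G = 0) (hGV : G * V = 0) : IsContraction (U * Vᵀ + G) := by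
  have hGU : Gᵀ * U = 0 := by rw [← transpose_transpose U, ← transpose_mul, hUG, transpose_zero]
  have hGQ : G * (1 - V * Vᵀ) = G := by
    rw [Matrix.mul_sub, Matrix.mul_one, ← Matrix.mul_assoc, hGV, Matrix.zero_mul, sub_zero]
  have hQG : (1 - V * Vᵀ) * Gᵀ = Gᵀ := by
    rw [← transpose_one_sub_mul_transpose, ← transpose_mul, hGQ]
  have hgram : (U * Vᵀ + G)ᵀ * (U * Vᵀ + G) = V * Vᵀ + Gᵀ * G := by
    rw [transpose_add, transpose_mul, transpose_transpose, Matrix.add_mul, Matrix.mul_add,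
      Matrix.mul_add, Matrix.mul_assoc V, ← Matrix.mul_assoc Uᵀ U, hU, Matrix.one_mul,
      Matrix.mul_assoc V, hUG, Matrix.mul_zero, add_zero, ← Matrix.mul_assoc Gᵀ U, hGU,
      Matrix.zero_mul, zero_add]
  have h : 1 - (U * Vᵀ + G)ᵀ * (U * Vᵀ + G) =
      (1 - V * Vᵀ)ᵀ * (1 - Gᵀ * G) * (1 - V * Vᵀ) := by
    rw [hgram, transpose_one_sub_mul_transpose, Matrix.mul_sub (1 - V * Vᵀ), Matrix.mul_one,
      Matrix.sub_mul, one_sub_mul_transpose_mul_self hV, ← Matrix.mul_assoc _ Gᵀ, hQG,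
      Matrix.mul_assoc Gᵀ, hGQ, sub_add_eq_sub_sub]
  rw [IsContraction, h]
  simpa only [conjTranspose_eq_transpose_of_trivial] using hG.conjTranspose_mul_mul_same _

end IsContraction

end Contraction

section SingularValues

variable {m n : Type*} [Fintype m]

lemma isHermitian_transpose_mul_self (A : Matrix m n ℝ) : (Aᵀ * A).IsHermitian := by
  simpa only [conjTranspose_eq_transpose_of_trivial] using isHermitian_conjTranspose_mul_self A

variable [Fintype n] [DecidableEq n] (A : Matrix m n ℝ)

noncomputable def singularValues (i : n) : ℝ :=
  √((isHermitian_transpose_mul_self A).eigenvalues i)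

noncomputable def rightSingularVectors : Matrix n n ℝ :=
  ((isHermitian_transpose_mul_self A).eigenvectorUnitary : Matrix n n ℝ)

/-- Since `0⁻¹ = 0`, the columns belonging to vanishing singular values are zero. -/
noncomputable def leftSingularVectors : Matrix m n ℝ :=
  A * rightSingularVectors A * diagonal fun i => (singularValues A i)⁻¹

noncomputable def polarFactor : Matrix m n ℝ :=
  leftSingularVectors A * (rightSingularVectors A)ᵀ

lemma singularValues_nonneg (i : n) : 0 ≤ singularValues A i := Real.sqrt_nonneg _

lemma rightSingularVectors_transpose_mul_self :
    (rightSingularVectors A)ᵀ * rightSingularVectors A = 1 := by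
  simpa only [rightSingularVectors, star_eq_conjTranspose,
    conjTranspose_eq_transpose_of_trivial] using
    (mem_unitaryGroup_iff').mp (isHermitian_transpose_mul_self A).eigenvectorUnitary.2

lemma rightSingularVectors_mul_transpose_self :
    rightSingularVectors A * (rightSingularVectors A)ᵀ = 1 := by
  simpa only [rightSingularVectors, star_eq_conjTranspose,
    conjTranspose_eq_transpose_of_trivial] using
    (mem_unitaryGroup_iff).mp (isHermitian_transpose_mul_self A).eigenvectorUnitary.2

lemma mul_rightSingularVectors_transpose_mul_self :
    (A * rightSingularVectors A)ᵀ * (A * rightSingularVectors A) =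
      diagonal fun i => singularValues A i ^ 2 := by
  have hsq : (fun i => singularValues A i ^ 2) =
      (isHermitian_transpose_mul_self A).eigenvalues := by
    funext i
    exact Real.sq_sqrt (eigenvalues_conjTranspose_mul_self_nonneg A i)
  have h := (isHermitian_transpose_mul_self A).conjStarAlgAut_star_eigenvectorUnitary
  simp only [Unitary.conjStarAlgAut_apply, Unitary.coe_star, star_star, RCLike.ofReal_real_eq_id,
    Function.id_comp] at h
  rw [hsq, ← h]
  simp only [rightSingularVectors, star_eq_conjTranspose, conjTranspose_eq_transpose_of_trivial,
    transpose_mul, Matrix.mul_assoc]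

lemma transpose_mul_self_eq :
    Aᵀ * A = rightSingularVectors A * (diagonal fun i => singularValues A i ^ 2) *
      (rightSingularVectors A)ᵀ := by
  rw [← mul_rightSingularVectors_transpose_mul_self]
  simp only [transpose_mul, Matrix.mul_assoc, rightSingularVectors_mul_transpose_self,
    Matrix.mul_one]
  simp only [← Matrix.mul_assoc, rightSingularVectors_mul_transpose_self, Matrix.one_mul]

lemma leftSingularVectors_transpose_mul_self :
    (leftSingularVectors A)ᵀ * leftSingularVectors A =
      diagonal fun i => ((singularValues A i)⁻¹ * singularValues A i) ^ 2 := by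
  rw [leftSingularVectors, transpose_mul, diagonal_transpose, Matrix.mul_assoc,
    ← Matrix.mul_assoc _ (A * _), mul_rightSingularVectors_transpose_mul_self,
    diagonal_mul_diagonal, diagonal_mul_diagonal]
  congr 1
  funext i
  ring

lemma isContraction_leftSingularVectors : IsContraction (leftSingularVectors A) := by
  rw [IsContraction, leftSingularVectors_transpose_mul_self, ← diagonal_one, diagonal_sub]
  refine PosSemidef.diagonal fun i => sub_nonneg.mpr ?_
  rcases eq_or_ne (singularValues A i) 0 with h | h <;> simp [h]

lemma isContraction_rightSingularVectors_transpose :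
    IsContraction (rightSingularVectors A)ᵀ :=
  isContraction_of_transpose_mul_self_eq_one <| by
    rw [transpose_transpose, rightSingularVectors_mul_transpose_self]

lemma isContraction_polarFactor : IsContraction (polarFactor A) :=
  (isContraction_rightSingularVectors_transpose A).mul (isContraction_leftSingularVectors A)

lemma leftSingularVectors_mul_diagonal_mul_transpose :
    leftSingularVectors A * diagonal (singularValues A) * (rightSingularVectors A)ᵀ = A := by
  -- a column of `A * rightSingularVectors A` has squared norm `singularValues A i ^ 2`
  have hker : A * rightSingularVectors A *
      (diagonal (fun i => (singularValues A i)⁻¹ * singularValues A i) - 1) = 0 := by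
    rw [← conjTranspose_mul_self_mul_eq_zero, conjTranspose_eq_transpose_of_trivial,
      mul_rightSingularVectors_transpose_mul_self, ← diagonal_one, diagonal_sub,
      diagonal_mul_diagonal, ← diagonal_zero]
    congr 1
    funext i
    rcases eq_or_ne (singularValues A i) 0 with h | h <;> simp [h]
  rw [Matrix.mul_sub, Matrix.mul_one, sub_eq_zero] at hker
  rw [leftSingularVectors, Matrix.mul_assoc (A * rightSingularVectors A), diagonal_mul_diagonal,
    hker, Matrix.mul_assoc, rightSingularVectors_mul_transpose_self, Matrix.mul_one]

lemma trace_transpose_mul_eq_sum (G : Matrix m n ℝ) :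
    trace (Gᵀ * A) =
      ∑ i, ((G * rightSingularVectors A)ᵀ * leftSingularVectors A) i i * singularValues A i := by
  conv_lhs => rw [← leftSingularVectors_mul_diagonal_mul_transpose A]
  rw [← Matrix.mul_assoc, trace_mul_comm, transpose_mul]
  simp only [trace, diag, ← Matrix.mul_assoc, mul_diagonal]

lemma transpose_mul_polarFactor_eq_zero {k : Type*} [Fintype k] {U : Matrix m k ℝ}
    (h : Uᵀ * A = 0) : Uᵀ * polarFactor A = 0 := by
  simp only [polarFactor, leftSingularVectors, ← Matrix.mul_assoc, h, Matrix.zero_mul]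

lemma polarFactor_mul_eq_zero {k : Type*} [Fintype k] {V : Matrix n k ℝ}
    (h : A * V = 0) : polarFactor A * V = 0 := by
  -- `σ⁻¹ = σ⁻³ σ²` exposes a factor `Aᵀ * A`, which `V` annihilates
  have hdiag : (diagonal fun i => (singularValues A i)⁻¹) =
      (diagonal fun i => (singularValues A i)⁻¹ ^ 3) *
        diagonal fun i => singularValues A i ^ 2 := by
    rw [diagonal_mul_diagonal]
    congr 1
    funext i
    rcases eq_or_ne (singularValues A i) 0 with h | h
    · simp [h]
    · field_simp
  calc polarFactor A * V
      = A * rightSingularVectors A * diagonal (fun i => (singularValues A i)⁻¹ ^ 3) *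
          ((rightSingularVectors A)ᵀ * rightSingularVectors A) *
          (diagonal fun i => singularValues A i ^ 2) * (rightSingularVectors A)ᵀ * V := by
        rw [rightSingularVectors_transpose_mul_self, Matrix.mul_one,
          Matrix.mul_assoc _ (diagonal _) (diagonal _), ← hdiag]
        rfl
    _ = A * rightSingularVectors A * diagonal (fun i => (singularValues A i)⁻¹ ^ 3) *
          (rightSingularVectors A)ᵀ * (Aᵀ * A * V) := by
        rw [transpose_mul_self_eq A]
        simp only [Matrix.mul_assoc]
    _ = 0 := by rw [Matrix.mul_assoc Aᵀ, h, Matrix.mul_zero, Matrix.mul_zero]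

end SingularValues

end Matrix

lemma frobNorm_sq {m n : ℕ} (M : Matrix (Fin m) (Fin n) ℝ) : frobNorm M ^ 2 = trace (Mᵀ * M) :=
  Real.sq_sqrt (trace_transpose_mul_self_nonneg M)

section NuclearNorm

variable {m n : ℕ} (A : Matrix (Fin m) (Fin n) ℝ)

lemma nuclearNorm_eq_sum_singularValues : nuclearNorm A = ∑ i, singularValues A i := rfl

lemma nuclearNorm_nonneg : 0 ≤ nuclearNorm A :=
  Finset.sum_nonneg fun i _ => singularValues_nonneg A i

lemma trace_transpose_mul_le_nuclearNorm {G : Matrix (Fin m) (Fin n) ℝ}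
    (hG : IsContraction G) : trace (Gᵀ * A) ≤ nuclearNorm A := by
  have hGP : IsContraction (G * rightSingularVectors A) :=
    (isContraction_of_transpose_mul_self_eq_one (rightSingularVectors_transpose_mul_self A)).mul hG
  rw [trace_transpose_mul_eq_sum, nuclearNorm_eq_sum_singularValues]
  exact Finset.sum_le_sum fun i _ => mul_le_of_le_one_left (singularValues_nonneg A i)
    (hGP.transpose_mul_apply_le_one (isContraction_leftSingularVectors A) i)

lemma trace_polarFactor_transpose_mul : trace ((polarFactor A)ᵀ * A) = nuclearNorm A := by
  have hP : polarFactor A * rightSingularVectors A = leftSingularVectors A := by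
    rw [polarFactor, Matrix.mul_assoc, rightSingularVectors_transpose_mul_self, Matrix.mul_one]
  rw [trace_transpose_mul_eq_sum, hP, leftSingularVectors_transpose_mul_self,
    nuclearNorm_eq_sum_singularValues]
  refine Finset.sum_congr rfl fun i _ => ?_
  rw [diagonal_apply_eq]
  rcases eq_or_ne (singularValues A i) 0 with h | h
  · simp [h]
  · field_simp

lemma nuclearNorm_add_le (B : Matrix (Fin m) (Fin n) ℝ) :
    nuclearNorm (A + B) ≤ nuclearNorm A + nuclearNorm B := by
  have hG := isContraction_polarFactor (A + B)
  rw [← trace_polarFactor_transpose_mul, Matrix.mul_add, trace_add]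
  exact add_le_add (trace_transpose_mul_le_nuclearNorm A hG)
    (trace_transpose_mul_le_nuclearNorm B hG)

lemma two_mul_nuclearNorm_mul_transpose_le {p : Type*} [Fintype p] (X : Matrix (Fin m) p ℝ)
    (Y : Matrix (Fin n) p ℝ) :
    2 * nuclearNorm (X * Yᵀ) ≤ trace (Xᵀ * X) + trace (Yᵀ * Y) := by
  set G := polarFactor (X * Yᵀ)
  have hG : trace (Gᵀ * (X * Yᵀ)) = trace ((G * Y)ᵀ * X) := by
    rw [transpose_mul, ← Matrix.mul_assoc, trace_mul_comm, Matrix.mul_assoc]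
  rw [← trace_polarFactor_transpose_mul, hG]
  linarith [two_mul_trace_transpose_mul_le (G * Y) X,
    (isContraction_polarFactor (X * Yᵀ)).trace_transpose_mul_self_mul_le Y]

end NuclearNorm

section TangentSpace

variable {d1 d2 r : ℕ} {U : Matrix (Fin d1) (Fin r) ℝ} {V : Matrix (Fin d2) (Fin r) ℝ}

def tangentProj (U : Matrix (Fin d1) (Fin r) ℝ) (V : Matrix (Fin d2) (Fin r) ℝ)
    (N : Matrix (Fin d1) (Fin d2) ℝ) : Matrix (Fin d1) (Fin d2) ℝ :=
  U * Uᵀ * N + N * (V * Vᵀ) - U * Uᵀ * N * (V * Vᵀ)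

lemma tangentProj_sub (N N' : Matrix (Fin d1) (Fin d2) ℝ) :
    tangentProj U V (N - N') = tangentProj U V N - tangentProj U V N' := by
  simp only [tangentProj, Matrix.mul_sub, Matrix.sub_mul]
  abel

lemma transpose_mul_sub_tangentProj (hU : Uᵀ * U = 1) (N : Matrix (Fin d1) (Fin d2) ℝ) :
    Uᵀ * (N - tangentProj U V N) = 0 := by
  simp only [tangentProj, Matrix.mul_sub, Matrix.mul_add, ← Matrix.mul_assoc, hU, Matrix.one_mul]
  abel

lemma sub_tangentProj_mul (hV : Vᵀ * V = 1) (N : Matrix (Fin d1) (Fin d2) ℝ) :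
    (N - tangentProj U V N) * V = 0 := by
  simp only [tangentProj, Matrix.sub_mul, Matrix.add_mul, Matrix.mul_assoc, hV, Matrix.mul_one]
  abel

lemma tangentProj_mul_diagonal_mul_transpose (hU : Uᵀ * U = 1) (hV : Vᵀ * V = 1)
    (d : Fin r → ℝ) : tangentProj U V (U * diagonal d * Vᵀ) = U * diagonal d * Vᵀ := by
  have hUΘ : U * Uᵀ * (U * diagonal d * Vᵀ) = U * diagonal d * Vᵀ := by
    simp only [← Matrix.mul_assoc, Matrix.mul_assoc U Uᵀ U, hU, Matrix.mul_one]
  have hΘV : U * diagonal d * Vᵀ * (V * Vᵀ) = U * diagonal d * Vᵀ := by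
    simp only [← Matrix.mul_assoc, Matrix.mul_assoc _ Vᵀ V, hV, Matrix.mul_one]
  rw [tangentProj, hUΘ, hΘV, add_sub_cancel_right]

lemma trace_transpose_mul_tangentProj_eq_zero {G : Matrix (Fin d1) (Fin d2) ℝ}
    (hUG : Uᵀ * G = 0) (hGV : G * V = 0) (N : Matrix (Fin d1) (Fin d2) ℝ) :
    trace (Gᵀ * tangentProj U V N) = 0 := by
  have hGU : Gᵀ * U = 0 := by rw [← transpose_transpose U, ← transpose_mul, hUG, transpose_zero]
  have hNV : trace (Gᵀ * (N * (V * Vᵀ))) = 0 := by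
    rw [← Matrix.mul_assoc, ← Matrix.mul_assoc, trace_mul_comm]
    simp only [← Matrix.mul_assoc, ← transpose_mul, hGV, transpose_zero, Matrix.zero_mul,
      trace_zero]
  simp only [tangentProj, Matrix.mul_sub, Matrix.mul_add, trace_sub, trace_add, hNV]
  simp only [← Matrix.mul_assoc, hGU, Matrix.zero_mul, trace_zero]
  ring

lemma mul_mul_transpose_add_tangentProj {S W : Matrix (Fin r) (Fin r) ℝ} (hSW : S * W = 1)
    (hWS : W * S = 1) (Δ : Matrix (Fin d1) (Fin d2) ℝ) :
    U * (S * S) * Vᵀ + tangentProj U V Δ =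
      (U * S + (1 - U * Uᵀ) * (Δ * V * W)) * (S * Vᵀ + W * Uᵀ * Δ) -
        (1 - U * Uᵀ) * (Δ * V * W) * (W * Uᵀ * Δ) := by
  have h1 : U * S * (W * Uᵀ * Δ) = U * Uᵀ * Δ := by
    simp only [Matrix.mul_assoc]
    rw [← Matrix.mul_assoc S, hSW, Matrix.one_mul]
  have h2 : (1 - U * Uᵀ) * (Δ * V * W) * (S * Vᵀ) = (1 - U * Uᵀ) * Δ * (V * Vᵀ) := by
    simp only [Matrix.mul_assoc]
    rw [← Matrix.mul_assoc W, hWS, Matrix.one_mul]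
  rw [Matrix.add_mul, Matrix.mul_add, Matrix.mul_add, h1, h2, tangentProj]
  simp only [Matrix.sub_mul, Matrix.one_mul, Matrix.mul_assoc]
  abel

lemma nuclearNorm_add_tangentProj_le_of_mul_eq_one (hU : Uᵀ * U = 1) (hV : Vᵀ * V = 1)
    {S W : Matrix (Fin r) (Fin r) ℝ} (hS : Sᵀ = S) (hSW : S * W = 1) (hWS : W * S = 1)
    (Δ : Matrix (Fin d1) (Fin d2) ℝ) :
    nuclearNorm (U * (S * S) * Vᵀ + tangentProj U V Δ) ≤
      trace (S * S) + mip (U * Vᵀ) Δ + trace ((Δ * V * W)ᵀ * (Δ * V * W)) +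
        trace ((W * Uᵀ * Δ)ᵀ * (W * Uᵀ * Δ)) := by
  set C := (1 - U * Uᵀ) * (Δ * V * W)
  set R := W * Uᵀ * Δ
  have hUC : Uᵀ * C = 0 := by
    have hUQ : Uᵀ * (1 - U * Uᵀ) = 0 := by
      rw [Matrix.mul_sub, Matrix.mul_one, ← Matrix.mul_assoc, hU, Matrix.one_mul, sub_self]
    rw [← Matrix.mul_assoc, hUQ, Matrix.zero_mul]
  have hX : trace ((U * S + C)ᵀ * (U * S + C)) = trace (S * S) + trace (Cᵀ * C) := by
    rw [trace_add_transpose_mul_add, transpose_mul U, Matrix.mul_assoc, ← Matrix.mul_assoc Uᵀ U,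
      hU, Matrix.one_mul, hS, Matrix.mul_assoc, hUC, Matrix.mul_zero, trace_zero]
    ring
  have hmip : trace ((V * S)ᵀ * Rᵀ) = mip (U * Vᵀ) Δ := by
    rw [← transpose_mul, trace_transpose, mip, transpose_mul, transpose_transpose,
      show R * (V * S) = W * (Uᵀ * Δ * V * S) by simp only [R, Matrix.mul_assoc],
      trace_mul_comm W, Matrix.mul_assoc _ S W, hSW, Matrix.mul_one, Matrix.mul_assoc V,
      trace_mul_comm V]
  have hY : trace ((V * S + Rᵀ)ᵀ * (V * S + Rᵀ)) =
      trace (S * S) + 2 * mip (U * Vᵀ) Δ + trace (Rᵀ * R) := by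
    rw [trace_add_transpose_mul_add, hmip, transpose_mul V, Matrix.mul_assoc,
      ← Matrix.mul_assoc Vᵀ V, hV, Matrix.one_mul, hS, transpose_transpose, trace_mul_comm R]
  have hsplit : U * (S * S) * Vᵀ + tangentProj U V Δ =
      (U * S + C) * (V * S + Rᵀ)ᵀ + (-C) * R := by
    rw [mul_mul_transpose_add_tangentProj hSW hWS, transpose_add, transpose_mul, hS,
      transpose_transpose, Matrix.neg_mul, sub_eq_add_neg]
  have hXY := two_mul_nuclearNorm_mul_transpose_le (U * S + C) (V * S + Rᵀ)
  have hCR : 2 * nuclearNorm ((-C) * R) ≤ trace (Cᵀ * C) + trace (Rᵀ * R) := by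
    simpa only [transpose_neg, Matrix.neg_mul, Matrix.mul_neg, neg_neg, transpose_transpose,
      trace_mul_comm R Rᵀ] using two_mul_nuclearNorm_mul_transpose_le (-C) Rᵀ
  have hC : trace (Cᵀ * C) ≤ trace ((Δ * V * W)ᵀ * (Δ * V * W)) :=
    (isContraction_one_sub_mul_transpose hU).trace_transpose_mul_self_mul_le _
  rw [hsplit]
  linarith [nuclearNorm_add_le ((U * S + C) * (V * S + Rᵀ)ᵀ) ((-C) * R)]

lemma nuclearNorm_add_tangentProj_le (hU : Uᵀ * U = 1) (hV : Vᵀ * V = 1) {dv : Fin r → ℝ}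
    (hdv : ∀ i, 0 < dv i) (Δ : Matrix (Fin d1) (Fin d2) ℝ) :
    nuclearNorm (U * diagonal dv * Vᵀ + tangentProj U V Δ) ≤
      ∑ i, dv i + mip (U * Vᵀ) Δ + frobNorm (Δ * V * diagonal fun i => (√(dv i))⁻¹) ^ 2 +
        frobNorm ((diagonal fun i => (√(dv i))⁻¹) * Uᵀ * Δ) ^ 2 := by
  have hsqrt : ∀ i, √(dv i) ≠ 0 := fun i => (Real.sqrt_pos.mpr (hdv i)).ne'
  have hSW : (diagonal fun i => √(dv i)) * (diagonal fun i => (√(dv i))⁻¹) = 1 := by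
    rw [diagonal_mul_diagonal, ← diagonal_one]
    exact congrArg diagonal (funext fun i => mul_inv_cancel₀ (hsqrt i))
  have hWS : (diagonal fun i => (√(dv i))⁻¹) * (diagonal fun i => √(dv i)) = 1 := by
    rw [diagonal_mul_diagonal, ← diagonal_one]
    exact congrArg diagonal (funext fun i => inv_mul_cancel₀ (hsqrt i))
  have hSS : (diagonal fun i => √(dv i)) * (diagonal fun i => √(dv i)) = diagonal dv := by
    rw [diagonal_mul_diagonal]
    exact congrArg diagonal (funext fun i => Real.mul_self_sqrt (hdv i).le)
  have h := nuclearNorm_add_tangentProj_le_of_mul_eq_one hU hV (diagonal_transpose _) hSW hWS Δ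
  rwa [hSS, trace_diagonal, ← frobNorm_sq, ← frobNorm_sq] at h

lemma mip_add_nuclearNorm_sub_tangentProj_le (hU : Uᵀ * U = 1) (hV : Vᵀ * V = 1)
    (M : Matrix (Fin d1) (Fin d2) ℝ) :
    mip (U * Vᵀ) M + nuclearNorm (M - tangentProj U V M) ≤ nuclearNorm M := by
  set B := M - tangentProj U V M
  have hUB : Uᵀ * polarFactor B = 0 :=
    transpose_mul_polarFactor_eq_zero B (transpose_mul_sub_tangentProj hU M)
  have hBV : polarFactor B * V = 0 := polarFactor_mul_eq_zero B (sub_tangentProj_mul hV M)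
  have hBM : trace ((polarFactor B)ᵀ * M) = nuclearNorm B := by
    conv_lhs => rw [← sub_add_cancel M (tangentProj U V M)]
    rw [Matrix.mul_add, trace_add, trace_polarFactor_transpose_mul,
      trace_transpose_mul_tangentProj_eq_zero hUB hBV, add_zero]
  calc mip (U * Vᵀ) M + nuclearNorm B = trace ((U * Vᵀ + polarFactor B)ᵀ * M) := by
        rw [transpose_add, Matrix.add_mul, trace_add, hBM, mip]
    _ ≤ nuclearNorm M :=
        trace_transpose_mul_le_nuclearNorm M
          ((isContraction_polarFactor B).mul_transpose_add hU hV hUB hBV)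

lemma mip_mul_transpose_mul_diagonal_mul_transpose (hU : Uᵀ * U = 1) (hV : Vᵀ * V = 1)
    (d : Fin r → ℝ) : mip (U * Vᵀ) (U * diagonal d * Vᵀ) = ∑ i, d i := by
  rw [mip, transpose_mul, transpose_transpose, Matrix.mul_assoc, ← Matrix.mul_assoc Uᵀ,
    ← Matrix.mul_assoc Uᵀ, hU, Matrix.one_mul, trace_mul_comm, Matrix.mul_assoc, hV,
    Matrix.mul_one, trace_diagonal]

lemma nuclearNorm_mul_diagonal_mul_transpose (hU : Uᵀ * U = 1) (hV : Vᵀ * V = 1)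
    {d : Fin r → ℝ} (hd : ∀ i, 0 ≤ d i) : nuclearNorm (U * diagonal d * Vᵀ) = ∑ i, d i := by
  refine le_antisymm ?_ ?_
  · set S : Matrix (Fin r) (Fin r) ℝ := diagonal fun i => √(d i)
    have hSS : S * S = diagonal d := by
      rw [diagonal_mul_diagonal]
      exact congrArg diagonal (funext fun i => Real.mul_self_sqrt (hd i))
    have htrace : ∀ {k : ℕ} {X : Matrix (Fin k) (Fin r) ℝ}, Xᵀ * X = 1 →
        trace ((X * S)ᵀ * (X * S)) = ∑ i, d i := fun hX => by
      rw [transpose_mul, Matrix.mul_assoc, ← Matrix.mul_assoc _ _ S, hX, Matrix.one_mul,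
        diagonal_transpose, hSS, trace_diagonal]
    have hfactor : U * diagonal d * Vᵀ = (U * S) * (V * S)ᵀ := by
      rw [transpose_mul, show Sᵀ = S from diagonal_transpose _, ← hSS]
      simp only [Matrix.mul_assoc]
    linarith [hfactor ▸ two_mul_nuclearNorm_mul_transpose_le (U * S) (V * S), htrace hU, htrace hV]
  · have h := mip_add_nuclearNorm_sub_tangentProj_le hU hV (U * diagonal d * Vᵀ)
    rw [tangentProj_mul_diagonal_mul_transpose hU hV, sub_self,
      mip_mul_transpose_mul_diagonal_mul_transpose hU hV] at h
    linarith [nuclearNorm_nonneg (0 : Matrix (Fin d1) (Fin d2) ℝ)]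

end TangentSpace

/-- Taylor expansion control of the nuclear norm with subdifferentiation. -/
theorem stmt1 {d1 d2 r : ℕ}
    (U : Matrix (Fin d1) (Fin r) ℝ) (V : Matrix (Fin d2) (Fin r) ℝ) (dv : Fin r → ℝ)
    (hU : Uᵀ * U = 1) (hV : Vᵀ * V = 1) (hdv : ∀ i, 0 < dv i)
    (Θ M : Matrix (Fin d1) (Fin d2) ℝ)
    (hΘ : Θ = U * Matrix.diagonal dv * Vᵀ)
    (PT : Matrix (Fin d1) (Fin d2) ℝ → Matrix (Fin d1) (Fin d2) ℝ)
    (hPT : ∀ N, PT N = U * Uᵀ * N + N * (V * Vᵀ) - U * Uᵀ * N * (V * Vᵀ)) :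
    0 ≤ nuclearNorm M - nuclearNorm Θ - nuclearNorm (M - PT M) - mip (U * Vᵀ) (M - Θ) ∧
      nuclearNorm M - nuclearNorm Θ - nuclearNorm (M - PT M) - mip (U * Vᵀ) (M - Θ)
        ≤ frobNorm ((PT M - Θ) * V * Matrix.diagonal (fun i => (Real.sqrt (dv i))⁻¹)) ^ 2
          + frobNorm (Matrix.diagonal (fun i => (Real.sqrt (dv i))⁻¹) * Uᵀ * (PT M - Θ)) ^ 2 := by
  obtain rfl : PT = tangentProj U V := funext hPT
  have hnuc : nuclearNorm Θ = ∑ i, dv i :=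
    hΘ ▸ nuclearNorm_mul_diagonal_mul_transpose hU hV fun i => (hdv i).le
  have hmip : mip (U * Vᵀ) Θ = ∑ i, dv i :=
    hΘ ▸ mip_mul_transpose_mul_diagonal_mul_transpose hU hV dv
  have hmip_sub : mip (U * Vᵀ) (M - Θ) = mip (U * Vᵀ) M - mip (U * Vᵀ) Θ := by
    simp only [mip, Matrix.mul_sub, trace_sub]
  refine ⟨by linarith [mip_add_nuclearNorm_sub_tangentProj_le hU hV M], ?_⟩
  have hM : Θ + tangentProj U V (M - Θ) + (M - tangentProj U V M) = M := by
    rw [tangentProj_sub, hΘ, tangentProj_mul_diagonal_mul_transpose hU hV]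
    abel
  have hΔV : (M - Θ) * V = (tangentProj U V M - Θ) * V := by
    rw [← sub_eq_zero, ← Matrix.sub_mul, sub_sub_sub_cancel_right, sub_tangentProj_mul hV]
  have hUΔ : Uᵀ * (M - Θ) = Uᵀ * (tangentProj U V M - Θ) := by
    rw [← sub_eq_zero, ← Matrix.mul_sub, sub_sub_sub_cancel_right, transpose_mul_sub_tangentProj hU]
  have hup := nuclearNorm_add_tangentProj_le hU hV hdv (M - Θ)
  rw [← hΘ, hΔV, Matrix.mul_assoc _ Uᵀ, hUΔ, ← Matrix.mul_assoc] at hup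
  have htri := nuclearNorm_add_le (Θ + tangentProj U V (M - Θ)) (M - tangentProj U V M)
  rw [hM] at htri
  linarith
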